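/- arXiv:1707.08702 — 6 statements merged into one kernel-verified Lean document; each statement's English description precedes it below -/
import Mathlib

section
/- Let L be a field with injective endomorphism τ and A = (0 b; 1 0) with τ(b) ≠ b. Then b ≠ 1, P = (1 b; 1 1) is invertible, and (τP)AP^{-1} = (1/(1−b))·((τ(b)−b, b(1−τ(b))); (1−b, 0)), a matrix of the form ((a', b'); (1, 0)) with a' ≠ 0. -/
theorem stmt5 {L : Type*} [Field L] [CharZero L]
    (τ : L →+* L) (hτ : Function.Injective τ)
    (b : L) (hb : τ b ≠ b) :
    b ≠ 1 ∧ IsUnit (!![1, b; 1, 1] : Matrix (Fin 2) (Fin 2) L).det ∧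
      (!![1, b; 1, 1]).map τ * !![0, b; 1, 0] * (!![1, b; 1, 1])⁻¹ =
        (1 - b)⁻¹ • !![τ b - b, b * (1 - τ b); 1 - b, 0] ∧
      (1 - b)⁻¹ * (τ b - b) ≠ 0 := by
  have hb1 : b ≠ 1 := fun h => hb (by simp [h])
  have hdet : (!![1, b; 1, 1] : Matrix (Fin 2) (Fin 2) L).det = 1 - b := by
    simp [Matrix.det_fin_two_of]
  have hd : (1 : L) - b ≠ 0 := sub_ne_zero.mpr hb1.symm
  refine ⟨hb1, by rw [hdet]; exact (isUnit_iff_ne_zero).mpr hd, ?_, ?_⟩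
  · have hinv : (!![1, b; 1, 1] : Matrix (Fin 2) (Fin 2) L)⁻¹
        = (1 - b)⁻¹ • !![1, -b; -1, 1] := by
      rw [Matrix.inv_def, Matrix.adjugate_fin_two, hdet, Ring.inverse_eq_inv]; norm_num
    rw [hinv]
    ext i j
    fin_cases i <;> fin_cases j <;>
      simp [Matrix.mul_apply, Fin.sum_univ_two, Matrix.map_apply] <;> ring
  · exact mul_ne_zero (inv_ne_zero hd) (sub_ne_zero.mpr hb)
end

section
/- Let F be a field, f transcendental over F, and τ an injective endomorphism of F(f) restricting to an endomorphism of F with τ(f) = 1 + r/f for some r ∈ F with τ-images well-defined. If M, N ∈ F[Y] are relatively prime polynomials, then the polynomials Y^{deg M}·τ(M)(1 + r/Y expressed as polynomial) and Y^{deg N}·τ(N)(similarly) are relatively prime in F[Y]. More precisely: if A·M + B·N = 1 in F[Y], then the polynomials obtained by substituting Y ↦ 1 + r/Y into τ-transformed M and N and clearing denominators by Y^{deg M} and Y^{deg N} respectively have gcd 1. -/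
open Polynomial

/-- For `M = Σ mᵢ Yⁱ` of degree `μ`, `starPoly τ r M = Y^μ · Σ τ(mᵢ)(1 + r/Y)ⁱ
    = Σ τ(mᵢ)(Y + r)ⁱ Y^{μ-i} ∈ F[Y]`. -/
noncomputable def starPoly {F : Type*} [Field F] (τ : F →+* F) (r : F) (M : F[X]) : F[X] :=
  ∑ i ∈ Finset.range (M.natDegree + 1),
    C (τ (M.coeff i)) * (X + C r) ^ i * X ^ (M.natDegree - i)

lemma starPoly_map_eval {F K : Type*} [Field F] [Field K] (τ : F →+* F) (φ : F →+* K)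
    (r : F) (M : F[X]) (x : K) :
    ((starPoly τ r M).map φ).eval x
      = ∑ i ∈ Finset.range (M.natDegree + 1),
          φ (τ (M.coeff i)) * (x + φ r) ^ i * x ^ (M.natDegree - i) := by
  simp only [starPoly, Polynomial.map_sum, Polynomial.map_mul, Polynomial.map_pow,
    Polynomial.map_add, Polynomial.map_C, Polynomial.map_X, Polynomial.eval_finset_sum,
    Polynomial.eval_mul, Polynomial.eval_pow, Polynomial.eval_add, Polynomial.eval_C,
    Polynomial.eval_X]

lemma starPoly_map_eval_zero {F K : Type*} [Field F] [Field K] (τ : F →+* F) (φ : F →+* K)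
    (r : F) (M : F[X]) :
    ((starPoly τ r M).map φ).eval 0
      = φ (τ M.leadingCoeff) * φ r ^ M.natDegree := by
  rw [starPoly_map_eval]
  rw [Finset.sum_eq_single M.natDegree]
  · rw [Nat.sub_self, pow_zero, mul_one, zero_add, Polynomial.leadingCoeff]
  · intro i hi hne
    have hlt : i < M.natDegree := lt_of_le_of_ne (Nat.lt_succ_iff.mp (Finset.mem_range.mp hi)) hne
    have : M.natDegree - i ≠ 0 := Nat.sub_ne_zero_of_lt hlt
    simp [zero_pow this]
  · intro habs
    exact absurd (Finset.self_mem_range_succ M.natDegree) habs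

lemma starPoly_map_eval_ne_zero {F K : Type*} [Field F] [Field K] (τ : F →+* F) (φ : F →+* K)
    (r : F) (M : F[X]) (x : K) (hx : x ≠ 0) :
    ((starPoly τ r M).map φ).eval x
      = x ^ M.natDegree * (M.map (φ.comp τ)).eval ((x + φ r) / x) := by
  rw [starPoly_map_eval]
  rw [Polynomial.eval_eq_sum_range, Polynomial.natDegree_map, Finset.mul_sum]
  refine Finset.sum_congr rfl fun i hi => ?_
  have hile : i ≤ M.natDegree := Nat.lt_succ_iff.mp (Finset.mem_range.mp hi)
  have hpow : x ^ (M.natDegree - i) * x ^ i = x ^ M.natDegree := pow_sub_mul_pow x hile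
  rw [Polynomial.coeff_map, div_pow, RingHom.comp_apply]
  field_simp
  rw [← hpow]
  ring

theorem stmt7 {F : Type*} [Field F] [CharZero F]
    (τ : F →+* F) (hτ : Function.Injective τ) (r : F) (hr : r ≠ 0)
    (M N : F[X]) (hM : M ≠ 0) (hN : N ≠ 0) (h : IsCoprime M N) :
    IsCoprime (starPoly τ r M) (starPoly τ r N) := by
  classical
  by_contra hco
  set K := AlgebraicClosure F
  set φ : F →+* K := algebraMap F K with hφ
  have hφinj : Function.Injective φ := (algebraMap F K).injective
  -- starPoly M is nonzero: its value at 0 (after mapping) is nonzero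
  have hval : ∀ (P : F[X]), P ≠ 0 → ((starPoly τ r P).map φ).eval 0 ≠ 0 := by
    intro P hP
    rw [starPoly_map_eval_zero]
    have h1 : τ P.leadingCoeff ≠ 0 := fun hz => (Polynomial.leadingCoeff_ne_zero.mpr hP)
      (hτ (by simpa using hz))
    have h2 : φ (τ P.leadingCoeff) ≠ 0 := fun hz => h1 (hφinj (by simpa using hz))
    have h3 : φ r ≠ 0 := fun hz => hr (hφinj (by simpa using hz))
    exact mul_ne_zero h2 (pow_ne_zero _ h3)
  have hM0 : starPoly τ r M ≠ 0 := by
    intro hz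
    exact hval M hM (by simp [hz])
  set d := EuclideanDomain.gcd (starPoly τ r M) (starPoly τ r N) with hd
  have hdM : d ∣ starPoly τ r M := EuclideanDomain.gcd_dvd_left _ _
  have hdN : d ∣ starPoly τ r N := EuclideanDomain.gcd_dvd_right _ _
  have hdu : ¬ IsUnit d := fun hu => hco (EuclideanDomain.gcd_isUnit_iff.mp hu)
  have hd0 : d ≠ 0 := fun hz => hM0 (by
    simpa using (EuclideanDomain.gcd_eq_zero_iff.mp (hd ▸ hz)).1)
  -- d has positive degree, so its image in K has a root
  have hdeg : (d.map φ).degree ≠ 0 := by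
    rw [Polynomial.degree_map]
    intro hz
    exact hdu (Polynomial.isUnit_iff_degree_eq_zero.mpr hz)
  obtain ⟨α, hα⟩ := IsAlgClosed.exists_root (d.map φ) hdeg
  rw [Polynomial.IsRoot] at hα
  have hroot : ∀ (P : F[X]), d ∣ P → ((P.map φ).eval α) = 0 := by
    intro P hdP
    obtain ⟨c, hc⟩ := hdP
    rw [hc, Polynomial.map_mul, Polynomial.eval_mul, hα, zero_mul]
  have hrM : ((starPoly τ r M).map φ).eval α = 0 := hroot _ hdM
  have hrN : ((starPoly τ r N).map φ).eval α = 0 := hroot _ hdN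
  by_cases hα0 : α = 0
  · exact hval M hM (hα0 ▸ hrM)
  · set β := (α + φ r) / α
    have heM : (M.map (φ.comp τ)).eval β = 0 := by
      have := hrM
      rw [starPoly_map_eval_ne_zero τ φ r M α hα0] at this
      exact (mul_eq_zero.mp this).resolve_left (pow_ne_zero _ hα0)
    have heN : (N.map (φ.comp τ)).eval β = 0 := by
      have := hrN
      rw [starPoly_map_eval_ne_zero τ φ r N α hα0] at this
      exact (mul_eq_zero.mp this).resolve_left (pow_ne_zero _ hα0)
    have hmap : IsCoprime (M.map (φ.comp τ)) (N.map (φ.comp τ)) :=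
      h.map (Polynomial.mapRingHom (φ.comp τ))
    obtain ⟨a, b, hab⟩ := hmap
    have := congrArg (Polynomial.eval β) hab
    simp [heM, heN] at this
end

section
/- Let F/K be an algebraic function field of one variable over a field K of characteristic zero, with an injective endomorphism τ₀ of F, and suppose there is a place P of F/K with v_P(τ₀ⁱ r) > 0 for all i ≥ 0, where 0 ≠ r ∈ F. Suppose further that for every i ≥ 1 the equation Eq(A, i) (with A = ((1, r); (1, 0))) has no solution algebraic over F. Let Y be transcendental over F with τ extending τ₀ by τ(Y) = 1 + r/Y. If N ∈ F[Y] is a nonzero polynomial of degree ν with Y^λ exactly dividing N, and N = α·Y^λ·Y^ν·τ(N) for some α ∈ F^×, where τ(N) denotes the rational function obtained by applying τ to coefficients and substituting Y ↦ 1 + r/Y, then N ∈ F^×. -/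
universe u

/-- `MoebiusEq f M g` means `f * (M₂₁ g + M₂₂) = M₁₁ g + M₁₂`, i.e. `Eq(f; M; g)`. -/
def MoebiusEq {U : Type*} [Field U] (f : U) (M : Matrix (Fin 2) (Fin 2) U) (g : U) : Prop :=
  f * (M 1 0 * g + M 1 1) = M 0 0 * g + M 0 1

/-- The τ-twisted cocycle `A_i = (τ^{i-1}A)⋯(τA)A`. -/
def cocycle {L : Type*} [Field L] (τ : L →+* L) (A : Matrix (Fin 2) (Fin 2) L) :
    ℕ → Matrix (Fin 2) (Fin 2) L
  | 0 => 1
  | n + 1 => A.map ((⇑τ)^[n]) * cocycle τ A n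

/-!
Clearing denominators, the functional equation reads `N = α X^λ · X^ν N^τ₀(1 + r/X)`. Over an
algebraic closure, with `σ` extending `τ₀`, the map `g w = r / (σ w - 1)` therefore sends every
root `w ≠ 1` of `N` to a root, and when `λ = 0` every root arises in this way. As `g` is
injective away from `1`, an orbit of roots avoiding `1` would be periodic, and a period `n` would
give the algebraic solution `g^n x = x` of `Eq(A, n)`, since `σ w = A · g w`. So the orbit of
every root reaches `1`. If `λ > 0`, then `0` is a root, but `v(τ₀ⁱ gᵏ 0) > 0` for all `i, k`, so
its orbit never reaches `1`. If `λ = 0`, the roots are the `g`-image of the roots other than `1`,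
so counting shows that `1` is not a root; hence `N` has no root at all and is constant.
-/

open Polynomial

theorem MoebiusEq.mul {U : Type*} [Field U] {f g h : U} {M M' : Matrix (Fin 2) (Fin 2) U}
    (h₁ : MoebiusEq f M g) (h₂ : MoebiusEq g M' h) : MoebiusEq f (M * M') h := by
  unfold MoebiusEq at *
  simp only [Matrix.mul_apply, Fin.sum_univ_two]
  linear_combination (M 0 0 - f * M 1 0) * h₂ + (M' 1 0 * h + M' 1 1) * h₁

theorem MoebiusEq.map {U V : Type*} [Field U] [Field V] (φ : U →+* V)
    {f g : U} {M : Matrix (Fin 2) (Fin 2) U} (h : MoebiusEq f M g) :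
    MoebiusEq (φ f) (M.map φ) (φ g) := by
  unfold MoebiusEq at *
  simpa using congrArg φ h

theorem moebiusEq_one {U : Type*} [Field U] (f : U) : MoebiusEq f 1 f := by
  simp [MoebiusEq]

theorem cocycle_succ_eq_map_mul {L : Type*} [Field L] (τ : L →+* L)
    (A : Matrix (Fin 2) (Fin 2) L) (n : ℕ) :
    cocycle τ A (n + 1) = (cocycle τ A n).map τ * A := by
  induction n with
  | zero => simp [cocycle]
  | succ n ih =>
    calc cocycle τ A (n + 2) = A.map (⇑τ)^[n + 1] * ((cocycle τ A n).map τ * A) := by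
          rw [cocycle, ih]
      _ = (cocycle τ A (n + 1)).map τ * A := by
          rw [cocycle, Matrix.map_mul, Matrix.map_map, ← Function.iterate_succ', mul_assoc]

theorem moebiusEq_cocycle_iterate {F L : Type*} [Field F] [Field L] {τ₀ : F →+* F}
    {σ : L →+* L} {ι : F →+* L} (hσ : ∀ x, σ (ι x) = ι (τ₀ x)) {A : Matrix (Fin 2) (Fin 2) F}
    {g : L → L} {x : L} (hg : ∀ k, MoebiusEq (σ (g^[k] x)) (A.map ι) (g^[k + 1] x)) (k : ℕ) :
    MoebiusEq (σ^[k] x) ((cocycle τ₀ A k).map ι) (g^[k] x) := by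
  induction k with
  | zero => simpa [cocycle] using moebiusEq_one x
  | succ k ih =>
    have hmap : ((cocycle τ₀ A k).map τ₀).map ι = ((cocycle τ₀ A k).map ι).map σ := by
      rw [Matrix.map_map, Matrix.map_map]
      exact congrArg _ (funext fun z => (hσ z).symm)
    rw [cocycle_succ_eq_map_mul, Matrix.map_mul, hmap, Function.iterate_succ_apply' (⇑σ)]
    exact (ih.map σ).mul (hg k)

theorem Set.Finite.notMem_of_subset_image_sdiff {α : Type*} {s : Set α} {g : α → α} {a : α}
    (hs : s.Finite) (h : s ⊆ g '' (s \ {a})) : a ∉ s := fun ha =>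
  ((Set.ncard_le_ncard h (hs.sdiff.image g)).trans (Set.ncard_image_le hs.sdiff)).not_gt
    (Set.ncard_sdiff_singleton_lt_of_mem ha hs)

theorem exists_iterate_eq_self_of_injOn {α : Type*} {g : α → α} {s : Set α} (hs : s.Finite)
    (hg : s.InjOn g) {x : α} (hx : ∀ k, g^[k] x ∈ s) : ∃ n, 0 < n ∧ g^[n] x = x := by
  have cancel : ∀ a d, g^[a + d] x = g^[a] x → g^[d] x = x := by
    intro a d
    induction a with
    | zero => simp
    | succ a ih =>
      intro h
      rw [Nat.add_right_comm, Function.iterate_succ_apply', Function.iterate_succ_apply'] at h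
      exact ih (hg (hx _) (hx _) h)
  obtain ⟨a, b, hab, h⟩ := hs.exists_lt_map_eq_of_forall_mem hx
  exact ⟨b - a, by omega, cancel a (b - a) (by rw [Nat.add_sub_cancel' hab.le, h])⟩

namespace Polynomial

variable {R : Type*} [CommSemiring R]

/-- `X ^ deg p * p (1 + r / X)`: `p` composed with the Möbius map `Y ↦ 1 + r / Y`, with its
denominator cleared. -/
noncomputable def moebiusComp (p : R[X]) (r : R) : R[X] :=
  ∑ j ∈ Finset.range (p.natDegree + 1), C (p.coeff j) * (X + C r) ^ j * X ^ (p.natDegree - j)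

theorem eval₂_moebiusComp {L : Type*} [Field L] (f : R →+* L) (p : R[X]) (r : R) {x : L}
    (hx : x ≠ 0) : (p.moebiusComp r).eval₂ f x = x ^ p.natDegree * p.eval₂ f (1 + f r / x) := by
  rw [moebiusComp, eval₂_finsetSum, eval₂_eq_sum_range, Finset.mul_sum]
  refine Finset.sum_congr rfl fun j hj => ?_
  have hx_pow : x ^ p.natDegree = x ^ (p.natDegree - j) * x ^ j := by
    rw [← pow_add, Nat.sub_add_cancel (Nat.lt_succ_iff.mp (Finset.mem_range.mp hj))]
  have h_moebius : 1 + f r / x = (x + f r) / x := by field_simp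
  simp only [eval₂_mul, eval₂_C, eval₂_pow, eval₂_add, eval₂_X, hx_pow, h_moebius, div_pow]
  field_simp

theorem eval₂_moebiusComp_zero {S : Type*} [CommSemiring S] (f : R →+* S) (p : R[X]) (r : R) :
    (p.moebiusComp r).eval₂ f 0 = f p.leadingCoeff * f r ^ p.natDegree := by
  rw [moebiusComp, eval₂_finsetSum, Finset.sum_eq_single p.natDegree]
  · simp [coeff_zero_eq_eval_zero]
  · intro j hj hne
    have : p.natDegree - j ≠ 0 := by
      have := Finset.mem_range.mp hj
      omega
    simp [zero_pow this]
  · simp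

theorem map_moebiusComp {S : Type*} [CommSemiring S] {f : R →+* S} (hf : Function.Injective f)
    (p : R[X]) (r : R) : (p.moebiusComp r).map f = (p.map f).moebiusComp (f r) := by
  simp [moebiusComp, Polynomial.map_sum, natDegree_map_eq_of_injective hf]

theorem map_eq_C_mul_X_pow_mul_moebiusComp {F L : Type*} [Field F] [Field L] {τ₀ : F →+* F}
    {σ : L →+* L} {ι : F →+* L} (hσ : ∀ x, σ (ι x) = ι (τ₀ x)) {N : F[X]} {α r : F} {n : ℕ}
    (hN : N = C α * X ^ n * (N.map τ₀).moebiusComp r) :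
    N.map ι = C (ι α) * X ^ n * ((N.map ι).map σ).moebiusComp (ι r) := by
  have hcomm : ι.comp τ₀ = σ.comp ι := RingHom.ext fun x => (hσ x).symm
  conv_lhs => rw [hN]
  rw [Polynomial.map_mul, Polynomial.map_mul, Polynomial.map_pow, map_C, map_X,
    map_moebiusComp ι.injective, map_map, map_map, hcomm]

theorem exists_eq_C_of_forall_not_isRoot_map {F L : Type*} [Field F] [Field L]
    [IsAlgClosed L] (ι : F →+* L) {N : F[X]} (hN : N ≠ 0) (h : ∀ x, ¬ (N.map ι).IsRoot x) :
    ∃ c, c ≠ 0 ∧ N = C c := by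
  have hdeg : N.natDegree = 0 := by
    rw [← natDegree_map ι, ← IsAlgClosed.roots_eq_zero_iff_natDegree_eq_zero,
      Multiset.eq_zero_iff_forall_notMem]
    exact fun x hx => h x (isRoot_of_mem_roots hx)
  refine ⟨N.coeff 0, fun h0 => hN ?_, eq_C_of_natDegree_eq_zero hdeg⟩
  rw [eq_C_of_natDegree_eq_zero hdeg, h0, map_zero]

end Polynomial

theorem RatFunc.algebraMap_eq_eval₂ {F : Type*} [Field F] (q : F[X]) :
    algebraMap F[X] (RatFunc F) q = q.eval₂ (algebraMap F (RatFunc F)) RatFunc.X := by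
  conv_lhs => rw [← eval₂_C_X (p := q)]
  rw [hom_eval₂, RatFunc.algebraMap_X]
  congr 1

theorem RatFunc.algebraMap_moebiusComp_map {F : Type*} [Field F] {τ₀ : F →+* F} {r : F}
    {τ : RatFunc F →+* RatFunc F}
    (hτF : ∀ x : F, τ (algebraMap F (RatFunc F) x) = algebraMap F (RatFunc F) (τ₀ x))
    (hτY : τ RatFunc.X = 1 + algebraMap F (RatFunc F) r / RatFunc.X) (p : F[X]) :
    algebraMap F[X] (RatFunc F) ((p.map τ₀).moebiusComp r) =
      RatFunc.X ^ p.natDegree * τ (algebraMap F[X] (RatFunc F) p) := by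
  have hτ : τ.comp (algebraMap F (RatFunc F)) = (algebraMap F (RatFunc F)).comp τ₀ :=
    RingHom.ext hτF
  rw [algebraMap_eq_eval₂, algebraMap_eq_eval₂, eval₂_moebiusComp _ _ _ RatFunc.X_ne_zero,
    hom_eval₂, hτ, hτY, ← eval₂_map, natDegree_map_eq_of_injective τ₀.injective]

theorem IsAlgClosed.exists_ringHom_extend {F L : Type*} [Field F] [Field L] [alg : Algebra F L]
    [hFL : Algebra.IsAlgebraic F L] [IsAlgClosed L] (τ₀ : F →+* F) :
    ∃ σ : L →+* L, ∀ x : F, σ (algebraMap F L x) = algebraMap F L (τ₀ x) := by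
  let twisted : Algebra F L := ((algebraMap F L).comp τ₀).toAlgebra
  let σ := @IsAlgClosed.lift L _ _ F _ _ L _ _ alg twisted _ _ hFL
  exact ⟨@AlgHom.toRingHom F L L _ _ _ alg twisted σ,
    fun x => @AlgHom.commutes F L L _ _ _ alg twisted σ x⟩

section MoebiusDynamics

variable {L : Type*} [Field L] {σ : L →+* L} {r : L}

/-- The solution `x` of `σ w = 1 + r / x`, i.e. of `MoebiusEq (σ w) A x`. -/
def moebiusInvStep (σ : L →+* L) (r w : L) : L := r / (σ w - 1)

theorem moebiusEq_moebiusInvStep {w : L} (hw : w ≠ 1) :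
    MoebiusEq (σ w) !![1, r; 1, 0] (moebiusInvStep σ r w) := by
  have : σ w - 1 ≠ 0 := sub_ne_zero.mpr ((map_ne_one_iff σ σ.injective).mpr hw)
  simp only [MoebiusEq, moebiusInvStep, Matrix.of_apply, Matrix.cons_val', Matrix.cons_val_zero,
    Matrix.cons_val_one, Matrix.cons_val_fin_one]
  field_simp
  ring

theorem moebiusInvStep_injOn (hr : r ≠ 0) : Set.InjOn (moebiusInvStep σ r) {1}ᶜ := by
  intro w hw w' hw' h
  have hne : ∀ {z : L}, z ∈ ({1}ᶜ : Set L) → σ z - 1 ≠ 0 := fun hz =>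
    sub_ne_zero.mpr ((map_ne_one_iff σ σ.injective).mpr hz)
  rw [moebiusInvStep, moebiusInvStep, div_eq_div_iff (hne hw) (hne hw'),
    mul_right_inj' hr, sub_left_inj] at h
  exact σ.injective h.symm

theorem semiconj_moebiusInvStep {F : Type*} [Field F] {τ₀ : F →+* F} {r : F}
    {ι : F →+* L} (hσ : ∀ x : F, σ (ι x) = ι (τ₀ x)) :
    Function.Semiconj ι (moebiusInvStep τ₀ r) (moebiusInvStep σ (ι r)) := by
  intro y
  simp only [moebiusInvStep, map_div₀, map_sub, map_one, hσ]

theorem isRoot_moebiusComp_moebiusInvStep (hr : r ≠ 0) {p : L[X]} {w : L} (hp : p.IsRoot w)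
    (hw : w ≠ 1) : ((p.map σ).moebiusComp r).IsRoot (moebiusInvStep σ r w) := by
  have hne : σ w - 1 ≠ 0 := sub_ne_zero.mpr ((map_ne_one_iff σ σ.injective).mpr hw)
  have h_moebius : 1 + r / moebiusInvStep σ r w = σ w := by
    rw [moebiusInvStep]
    field_simp
    ring
  have hx : moebiusInvStep σ r w ≠ 0 := div_ne_zero hr hne
  rw [IsRoot, ← eval₂_id, eval₂_moebiusComp _ _ _ hx, RingHom.id_apply,
    h_moebius, eval₂_id, hp.map.eq_zero, mul_zero]

theorem exists_moebiusInvStep_eq_of_isRoot_moebiusComp [IsAlgClosed L] (hr : r ≠ 0) {p : L[X]}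
    (hp : p ≠ 0) {x : L} (hx : ((p.map σ).moebiusComp r).IsRoot x) :
    ∃ w, p.IsRoot w ∧ w ≠ 1 ∧ moebiusInvStep σ r w = x := by
  have hx0 : x ≠ 0 := by
    rintro rfl
    rw [IsRoot, ← eval₂_id, eval₂_moebiusComp_zero] at hx
    simp [hr, hp] at hx
  rw [IsRoot, ← eval₂_id, eval₂_moebiusComp _ _ _ hx0, eval₂_id, RingHom.id_apply] at hx
  have ht : (p.map σ).IsRoot (1 + r / x) := (mul_eq_zero.mp hx).resolve_left (pow_ne_zero _ hx0)
  obtain ⟨w, hw, hσw⟩ : ∃ w ∈ p.roots, σ w = 1 + r / x := by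
    rw [← Multiset.mem_map, ← (IsAlgClosed.splits p).roots_map_of_injective σ.injective,
      mem_roots (map_ne_zero hp)]
    exact ht
  refine ⟨w, (mem_roots hp).mp hw, ?_, ?_⟩
  · rintro rfl
    simp [hr, hx0] at hσw
  · rw [moebiusInvStep, hσw, add_sub_cancel_left, div_div_cancel₀ hr]

theorem isRoot_moebiusInvStep_of_eq_mul_moebiusComp (hr : r ≠ 0) {p : L[X]} {a : L} {n : ℕ}
    (hpeq : p = C a * X ^ n * (p.map σ).moebiusComp r) {w : L} (hw : p.IsRoot w) (h1 : w ≠ 1) :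
    p.IsRoot (moebiusInvStep σ r w) := by
  have h := isRoot_moebiusComp_moebiusInvStep (σ := σ) hr hw h1
  rw [hpeq]
  simp only [IsRoot, eval_mul, h.eq_zero, mul_zero]

theorem not_isRoot_one_of_eq_C_mul_moebiusComp [IsAlgClosed L] (hr : r ≠ 0) {p : L[X]}
    (hp : p ≠ 0) {a : L}
    (ha : a ≠ 0) (hpeq : p = C a * (p.map σ).moebiusComp r) : ¬ p.IsRoot 1 := by
  refine (finite_setOfPred_isRoot hp).notMem_of_subset_image_sdiff
    (g := moebiusInvStep σ r) fun x hx => ?_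
  have hx' : ((p.map σ).moebiusComp r).IsRoot x := by
    rw [Set.mem_ofPred_eq, hpeq, IsRoot, eval_mul, eval_C] at hx
    exact (mul_eq_zero.mp hx).resolve_left ha
  obtain ⟨w, hw, hw1, rfl⟩ := exists_moebiusInvStep_eq_of_isRoot_moebiusComp hr hp hx'
  exact ⟨w, ⟨hw, hw1⟩, rfl⟩

end MoebiusDynamics

theorem AddValuation.pos_iterate_moebiusInvStep_zero {F Γ : Type*} [Field F]
    [LinearOrderedAddCommMonoidWithTop Γ] (v : AddValuation F Γ) {τ₀ : F →+* F} {r : F}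
    (hvr : ∀ i : ℕ, 0 < v ((⇑τ₀)^[i] r)) (k i : ℕ) :
    0 < v ((⇑τ₀)^[i] ((moebiusInvStep τ₀ r)^[k] 0)) := by
  induction k generalizing i with
  | zero => simpa using (hvr 0).trans_le le_top
  | succ k ih =>
    set y := (moebiusInvStep τ₀ r)^[k] 0
    have hden : v ((⇑τ₀)^[i + 1] y - 1) = 0 := by
      rw [v.map_sub_eq_of_lt_right (by simpa using ih (i + 1)), v.map_one]
    have hne : (⇑τ₀)^[i + 1] y - 1 ≠ 0 := by
      intro h
      simpa [sub_eq_zero.mp h] using ih (i + 1)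
    have h_iter : (⇑τ₀)^[i] (moebiusInvStep τ₀ r y) = (⇑τ₀)^[i] r / ((⇑τ₀)^[i + 1] y - 1) := by
      rw [moebiusInvStep, ← RingHom.coe_pow, map_div₀, _root_.map_sub, _root_.map_one,
        RingHom.coe_pow, Function.iterate_succ_apply]
    have hval : v ((⇑τ₀)^[i] r) = v ((⇑τ₀)^[i] (moebiusInvStep τ₀ r y)) := by
      rw [h_iter, ← add_zero (v (_ / _)), ← hden, ← v.map_mul, div_mul_cancel₀ _ hne]
    rw [Function.iterate_succ_apply', ← hval]
    exact hvr i

theorem AddValuation.iterate_moebiusInvStep_zero_ne_one {F Γ : Type*} [Field F]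
    [LinearOrderedAddCommMonoidWithTop Γ] (v : AddValuation F Γ) {τ₀ : F →+* F} {r : F}
    (hvr : ∀ i : ℕ, 0 < v ((⇑τ₀)^[i] r)) (k : ℕ) : (moebiusInvStep τ₀ r)^[k] 0 ≠ 1 := by
  intro h
  simpa [h] using v.pos_iterate_moebiusInvStep_zero hvr k 0

theorem exists_iterate_moebiusInvStep_eq_one {F L : Type*} [Field F] [Field L] [Algebra F L]
    {τ₀ : F →+* F} {σ : L →+* L}
    (hσ : ∀ x : F, σ (algebraMap F L x) = algebraMap F L (τ₀ x)) {r : F} (hr : r ≠ 0)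
    (hno : ∀ u : L, ∀ i, 1 ≤ i →
      ¬ MoebiusEq (σ^[i] u) ((cocycle τ₀ !![1, r; 1, 0] i).map (algebraMap F L)) u)
    {p : L[X]} (hp : p ≠ 0)
    (hstep : ∀ w, p.IsRoot w → w ≠ 1 → p.IsRoot (moebiusInvStep σ (algebraMap F L r) w))
    {x : L} (hx : p.IsRoot x) :
    ∃ k, (moebiusInvStep σ (algebraMap F L r))^[k] x = 1 ∧ p.IsRoot 1 := by
  set g := moebiusInvStep σ (algebraMap F L r)
  -- Otherwise the orbit of `x` stays among the roots other than `1`, where `g` is injective.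
  by_contra! hcon
  have horbit : ∀ k, g^[k] x ∈ {w | p.IsRoot w ∧ w ≠ 1} := by
    intro k
    induction k with
    | zero => exact ⟨hx, fun h => hcon 0 h (h ▸ hx)⟩
    | succ k ih =>
      have hroot : p.IsRoot (g^[k + 1] x) := by
        rw [Function.iterate_succ_apply']
        exact hstep _ ih.1 ih.2
      exact ⟨hroot, fun h => hcon _ h (h ▸ hroot)⟩
  obtain ⟨n, hn, hper⟩ := exists_iterate_eq_self_of_injOn
    ((finite_setOfPred_isRoot hp).subset fun w hw => hw.1)
    ((moebiusInvStep_injOn ((_root_.map_ne_zero _).mpr hr)).mono fun w hw => hw.2) horbit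
  have hA : (!![1, r; 1, 0] : Matrix (Fin 2) (Fin 2) F).map (algebraMap F L) =
      !![1, algebraMap F L r; 1, 0] := by
    ext i j
    fin_cases i <;> fin_cases j <;> simp
  have hcycle := moebiusEq_cocycle_iterate hσ (A := !![1, r; 1, 0]) (g := g) (x := x)
    (fun k => by
      rw [hA, Function.iterate_succ_apply']
      exact moebiusEq_moebiusInvStep (horbit k).2) n
  rw [hper] at hcycle
  exact hno x n hn hcycle

theorem stmt8_general {F : Type u} [Field F]
    (τ₀ : F →+* F)
    (r : F) (hr : r ≠ 0)
    -- a place `P` of `F/K` with `v_P(τ₀ⁱ r) > 0` for all `i ≥ 0`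
    (v : AddValuation F (WithTop ℤ))
    (hvr : ∀ i : ℕ, 0 < v ((⇑τ₀)^[i] r))
    -- for every `i ≥ 1`, `Eq(A, i)` has no solution algebraic over `F`
    (hnoalg : ∀ (U : Type u) [Field U] [Algebra F U] (σ : U →+* U),
      (∀ x : F, σ (algebraMap F U x) = algebraMap F U (τ₀ x)) →
      ∀ u : U, IsAlgebraic F u → ∀ i : ℕ, 1 ≤ i →
        ¬ MoebiusEq ((⇑σ)^[i] u)
            ((cocycle τ₀ !![1, r; 1, 0] i).map (algebraMap F U)) u)
    -- `τ` extends `τ₀` to `F(Y)` with `τ(Y) = 1 + r/Y`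
    (τ : RatFunc F →+* RatFunc F)
    (hτF : ∀ x : F, τ (algebraMap F (RatFunc F) x) = algebraMap F (RatFunc F) (τ₀ x))
    (hτY : τ RatFunc.X = 1 + algebraMap F (RatFunc F) r / RatFunc.X)
    (N : Polynomial F) (hN : N ≠ 0) (lam : ℕ)
    (α : F) (hα : α ≠ 0)
    (heq : algebraMap (Polynomial F) (RatFunc F) N =
      algebraMap F (RatFunc F) α * RatFunc.X ^ lam * RatFunc.X ^ N.natDegree *
        τ (algebraMap (Polynomial F) (RatFunc F) N)) :
    ∃ c : F, c ≠ 0 ∧ N = Polynomial.C c := by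
  obtain ⟨σ, hσ⟩ := IsAlgClosed.exists_ringHom_extend (L := AlgebraicClosure F) τ₀
  set ι := algebraMap F (AlgebraicClosure F)
  have hN_eq : N = C α * X ^ lam * (N.map τ₀).moebiusComp r := by
    apply IsFractionRing.injective F[X] (RatFunc F)
    rw [heq, map_mul, map_mul, map_pow, RatFunc.algebraMap_C,
      ← RatFunc.algebraMap_eq_C, RatFunc.algebraMap_X, RatFunc.algebraMap_moebiusComp_map hτF hτY]
    ring
  have hp_eq := map_eq_C_mul_X_pow_mul_moebiusComp hσ hN_eq
  have hp : N.map ι ≠ 0 := Polynomial.map_ne_zero hN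
  have hιr : ι r ≠ 0 := (map_ne_zero ι).mpr hr
  have horbit {x} (hx : (N.map ι).IsRoot x) :=
    exists_iterate_moebiusInvStep_eq_one hσ hr
      (fun u => hnoalg _ σ hσ u (Algebra.IsAlgebraic.isAlgebraic u)) hp
      (fun _ => isRoot_moebiusInvStep_of_eq_mul_moebiusComp hιr hp_eq) hx
  obtain rfl : lam = 0 := by
    by_contra hlam
    obtain ⟨k, hk, -⟩ := horbit (x := 0) (by rw [hp_eq]; simp [hlam])
    rw [← map_zero ι, ← ((semiconj_moebiusInvStep hσ).iterate_right k).eq,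
      map_eq_one_iff _ ι.injective] at hk
    exact v.iterate_moebiusInvStep_zero_ne_one hvr k hk
  rw [pow_zero, mul_one] at hp_eq
  have hone : ¬ (N.map ι).IsRoot 1 :=
    not_isRoot_one_of_eq_C_mul_moebiusComp hιr hp ((map_ne_zero ι).mpr hα) hp_eq
  exact exists_eq_C_of_forall_not_isRoot_map ι hN fun x hx => hone (horbit hx).choose_spec.2

theorem stmt8 {K : Type*} {F : Type u} [Field K] [CharZero K] [Field F] [Algebra K F]
    -- `F/K` is an algebraic function field of one variable
    (hFK : ∃ x : F, Transcendental K x ∧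
      Algebra.IsAlgebraic (IntermediateField.adjoin K ({x} : Set F)) F)
    (τ₀ : F →+* F) (hτ₀ : Function.Injective τ₀)
    (r : F) (hr : r ≠ 0)
    -- a place `P` of `F/K` with `v_P(τ₀ⁱ r) > 0` for all `i ≥ 0`
    (v : AddValuation F (WithTop ℤ))
    (hvK : ∀ a : K, a ≠ 0 → v (algebraMap K F a) = 0)
    (hvnorm : ∃ z : F, z ≠ 0 ∧ v z = 1)
    (hvr : ∀ i : ℕ, 0 < v ((⇑τ₀)^[i] r))
    -- for every `i ≥ 1`, `Eq(A, i)` has no solution algebraic over `F`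
    (hnoalg : ∀ (U : Type u) [Field U] [Algebra F U] (σ : U →+* U),
      (∀ x : F, σ (algebraMap F U x) = algebraMap F U (τ₀ x)) →
      ∀ u : U, IsAlgebraic F u → ∀ i : ℕ, 1 ≤ i →
        ¬ MoebiusEq ((⇑σ)^[i] u)
            ((cocycle τ₀ !![1, r; 1, 0] i).map (algebraMap F U)) u)
    -- `τ` extends `τ₀` to `F(Y)` with `τ(Y) = 1 + r/Y`
    (τ : RatFunc F →+* RatFunc F)
    (hτF : ∀ x : F, τ (algebraMap F (RatFunc F) x) = algebraMap F (RatFunc F) (τ₀ x))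
    (hτY : τ RatFunc.X = 1 + algebraMap F (RatFunc F) r / RatFunc.X)
    (N : Polynomial F) (hN : N ≠ 0) (lam : ℕ)
    (hdvd : Polynomial.X ^ lam ∣ N) (hndvd : ¬ Polynomial.X ^ (lam + 1) ∣ N)
    (α : F) (hα : α ≠ 0)
    (heq : algebraMap (Polynomial F) (RatFunc F) N =
      algebraMap F (RatFunc F) α * RatFunc.X ^ lam * RatFunc.X ^ N.natDegree *
        τ (algebraMap (Polynomial F) (RatFunc F) N)) :
    ∃ c : F, c ≠ 0 ∧ N = Polynomial.C c :=
  stmt8_general τ₀ r hr v hvr hnoalg τ hτF hτY N hN lam α hα heq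
end

section
/- Let (F, D₀, τ₀) be a field with derivation D₀ and injective endomorphism τ₀ satisfying D₀τ₀ = s·τ₀D₀ for some s ∈ F^×. Let r ∈ F^×, and suppose there exists g ∈ F satisfying τ₀²(sr)·τ₀(s)·s·τ₀³(g) + (τ₀(r)+1)·τ₀(s)·s·τ₀²(g) − (τ₀(r)+1)·s·τ₀(g) − r·g + s·τ₀(D₀(r)/r) = 0. Define R = g·Y² − (τ₀(sr)·s·τ₀²(g) + s·τ₀(g) − r·g + D₀(r)/r)·Y − s·r·τ₀(g) ∈ F[Y]. Then for f transcendental over F, the unique derivation D on F(f) extending D₀ with D(f) = −R(f), together with the endomorphism τ of F(f) extending τ₀ with τ(f) = 1 + r/f, satisfy D∘τ = s·τ∘D on F(f). -/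
/-!
`x ↦ D (τ x) - s * τ (D x)` is additive and satisfies the `τ`-twisted Leibniz rule, so its zero set
is an intermediate field of `F(f)/F`; as it vanishes on `F` by the commutation on `F`, it suffices
to check `f`. There, clearing the denominator `f ^ 2`, the defect turns out to be minus the left
side of the equation for `g` times `τ f = (f + r) / f`.
-/

open Polynomial

section TwistedLeibniz

variable {K L M : Type*} [Field K] [Field L] [Field M] [Algebra K L]

def IntermediateField.kerOfTwistedLeibniz (Δ : L → M) (σ : L →+* M)
    (hadd : ∀ x y, Δ (x + y) = Δ x + Δ y) (hmul : ∀ x y, Δ (x * y) = Δ x * σ y + σ x * Δ y)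
    (hK : ∀ a, Δ (algebraMap K L a) = 0) : IntermediateField K L where
  carrier := {x | Δ x = 0}
  mul_mem' {x y} hx hy := by simp_all
  add_mem' {x y} hx hy := by simp_all
  algebraMap_mem' := hK
  inv_mem' x hx := by
    by_cases h0 : x = 0
    · simpa [h0] using hK 0
    · have h1 : Δ 1 = 0 := by simpa using hK 1
      have hx : Δ x = 0 := hx
      rw [← mul_inv_cancel₀ h0, hmul, hx, zero_mul, zero_add] at h1
      exact (mul_eq_zero.mp h1).resolve_left (map_ne_zero σ |>.mpr h0)

theorem RatFunc.eq_zero_of_twistedLeibniz (Δ : RatFunc K → M) (σ : RatFunc K →+* M)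
    (hadd : ∀ x y, Δ (x + y) = Δ x + Δ y) (hmul : ∀ x y, Δ (x * y) = Δ x * σ y + σ x * Δ y)
    (hK : ∀ a, Δ (algebraMap K (RatFunc K) a) = 0) (hX : Δ RatFunc.X = 0) (x : RatFunc K) :
    Δ x = 0 := by
  have hker : IntermediateField.kerOfTwistedLeibniz Δ σ hadd hmul hK = ⊤ := by
    rw [eq_top_iff, ← RatFunc.adjoin_X, IntermediateField.adjoin_simple_le_iff]
    exact hX
  have hx : x ∈ IntermediateField.kerOfTwistedLeibniz Δ σ hadd hmul hK :=
    hker ▸ IntermediateField.mem_top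
  exact hx

end TwistedLeibniz

section Leibniz

variable {K : Type*} [Field K] {D : K → K}

theorem map_one_eq_zero_of_leibniz (hmul : ∀ x y, D (x * y) = D x * y + x * D y) : D 1 = 0 := by
  simpa using hmul 1 1

theorem map_inv_of_leibniz (hmul : ∀ x y, D (x * y) = D x * y + x * D y) {x : K} (hx : x ≠ 0) :
    D x⁻¹ = -D x / x ^ 2 := by
  have h := hmul x x⁻¹
  rw [mul_inv_cancel₀ hx, map_one_eq_zero_of_leibniz hmul] at h
  rw [eq_div_iff (pow_ne_zero 2 hx)]
  linear_combination (-x) * h - D x * mul_inv_cancel₀ hx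

end Leibniz

section Riccati

variable {F : Type*} [Field F] (τ₀ : F →+* F) (D₀ : F → F) (s r g : F)

noncomputable def riccatiPoly : F[X] :=
  C g * X ^ 2 - C (τ₀ (s * r) * s * τ₀ (τ₀ g) + s * τ₀ g - r * g + D₀ r / r) * X
    - C (s * r * τ₀ g)

def riccatiObstruction : F :=
  τ₀ (τ₀ (s * r)) * τ₀ s * s * τ₀ (τ₀ (τ₀ g)) + (τ₀ r + 1) * τ₀ s * s * τ₀ (τ₀ g)
    - (τ₀ r + 1) * s * τ₀ g - r * g + s * τ₀ (D₀ r / r)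

theorem riccati_twistedDefect_X (hr : r ≠ 0) (D : RatFunc F → RatFunc F)
    (hDadd : ∀ x y, D (x + y) = D x + D y) (hDmul : ∀ x y, D (x * y) = D x * y + x * D y)
    (hDF : ∀ x, D (algebraMap F (RatFunc F) x) = algebraMap F (RatFunc F) (D₀ x))
    (hDX : D RatFunc.X = -aeval (RatFunc.X : RatFunc F) (riccatiPoly τ₀ D₀ s r g))
    (τ : RatFunc F →+* RatFunc F)
    (hτF : ∀ x, τ (algebraMap F (RatFunc F) x) = algebraMap F (RatFunc F) (τ₀ x))
    (hτX : τ RatFunc.X = 1 + algebraMap F (RatFunc F) r / RatFunc.X) :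
    D (τ RatFunc.X) - algebraMap F (RatFunc F) s * τ (D RatFunc.X)
      = -algebraMap F (RatFunc F) (riccatiObstruction τ₀ D₀ s r g) * τ RatFunc.X := by
  have hX : (RatFunc.X : RatFunc F) ≠ 0 := RatFunc.X_ne_zero
  have hr' : algebraMap F (RatFunc F) r ≠ 0 := (_root_.map_ne_zero _).mpr hr
  rw [hτX, div_eq_mul_inv, hDadd, hDmul, hDF, map_one_eq_zero_of_leibniz hDmul,
    map_inv_of_leibniz hDmul hX, hDX]
  simp only [riccatiPoly, riccatiObstruction, map_neg, map_sub, map_add, map_mul, map_pow,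
    map_one, map_div₀, aeval_X, aeval_C, hτF, hτX]
  field_simp
  ring

end Riccati

theorem stmt13_general {F : Type*} [Field F]
    (D₀ : F → F)
    (τ₀ : F →+* F)
    (s r : F) (hr : r ≠ 0)
    -- the twisted commutation `D₀∘τ₀ = s·(τ₀∘D₀)` on `F`
    (hcomm₀ : ∀ x : F, D₀ (τ₀ x) = s * τ₀ (D₀ x))
    (g : F)
    (hg : τ₀ (τ₀ (s * r)) * τ₀ s * s * τ₀ (τ₀ (τ₀ g))
        + (τ₀ r + 1) * τ₀ s * s * τ₀ (τ₀ g)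
        - (τ₀ r + 1) * s * τ₀ g - r * g + s * τ₀ (D₀ r / r) = 0)
    (R : Polynomial F)
    (hR : R = Polynomial.C g * Polynomial.X ^ 2
        - Polynomial.C (τ₀ (s * r) * s * τ₀ (τ₀ g) + s * τ₀ g - r * g + D₀ r / r)
            * Polynomial.X
        - Polynomial.C (s * r * τ₀ g))
    -- `D` is the derivation of `F(f)` extending `D₀` with `D f = -R(f)`
    (D : RatFunc F → RatFunc F)
    (hDadd : ∀ x y : RatFunc F, D (x + y) = D x + D y)
    (hDmul : ∀ x y : RatFunc F, D (x * y) = D x * y + x * D y)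
    (hDF : ∀ x : F, D (algebraMap F (RatFunc F) x) = algebraMap F (RatFunc F) (D₀ x))
    (hDf : D RatFunc.X = -(Polynomial.aeval (RatFunc.X : RatFunc F) R))
    -- `τ` is the endomorphism of `F(f)` extending `τ₀` with `τ f = 1 + r/f`
    (τ : RatFunc F →+* RatFunc F)
    (hτF : ∀ x : F, τ (algebraMap F (RatFunc F) x) = algebraMap F (RatFunc F) (τ₀ x))
    (hτf : τ RatFunc.X = 1 + algebraMap F (RatFunc F) r / RatFunc.X) :
    ∀ x : RatFunc F, D (τ x) = algebraMap F (RatFunc F) s * τ (D x) := by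
  have hDf' : D RatFunc.X = -aeval RatFunc.X (riccatiPoly τ₀ D₀ s r g) := by
    rw [hDf, hR, riccatiPoly]
  have hf := riccati_twistedDefect_X τ₀ D₀ s r g hr D hDadd hDmul hDF hDf' τ hτF hτf
  rw [show riccatiObstruction τ₀ D₀ s r g = 0 from hg, map_zero, neg_zero, zero_mul] at hf
  refine fun x ↦ sub_eq_zero.mp <| RatFunc.eq_zero_of_twistedLeibniz
    (fun y ↦ D (τ y) - algebraMap F (RatFunc F) s * τ (D y)) τ ?_ ?_ ?_ hf x
  · intro a b
    simp only [map_add, hDadd]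
    ring
  · intro a b
    simp only [map_add, map_mul, hDmul]
    ring
  · intro a
    simp only [hτF, hDF, hcomm₀, map_mul, sub_self]

theorem stmt13 {F : Type*} [Field F] [CharZero F]
    (D₀ : F → F)
    (hD₀add : ∀ x y : F, D₀ (x + y) = D₀ x + D₀ y)
    (hD₀mul : ∀ x y : F, D₀ (x * y) = D₀ x * y + x * D₀ y)
    (τ₀ : F →+* F) (hτ₀ : Function.Injective τ₀)
    (s r : F) (hs : s ≠ 0) (hr : r ≠ 0)
    -- the twisted commutation `D₀∘τ₀ = s·(τ₀∘D₀)` on `F`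
    (hcomm₀ : ∀ x : F, D₀ (τ₀ x) = s * τ₀ (D₀ x))
    (g : F)
    (hg : τ₀ (τ₀ (s * r)) * τ₀ s * s * τ₀ (τ₀ (τ₀ g))
        + (τ₀ r + 1) * τ₀ s * s * τ₀ (τ₀ g)
        - (τ₀ r + 1) * s * τ₀ g - r * g + s * τ₀ (D₀ r / r) = 0)
    (R : Polynomial F)
    (hR : R = Polynomial.C g * Polynomial.X ^ 2
        - Polynomial.C (τ₀ (s * r) * s * τ₀ (τ₀ g) + s * τ₀ g - r * g + D₀ r / r)
            * Polynomial.X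
        - Polynomial.C (s * r * τ₀ g))
    -- `D` is the derivation of `F(f)` extending `D₀` with `D f = -R(f)`
    (D : RatFunc F → RatFunc F)
    (hDadd : ∀ x y : RatFunc F, D (x + y) = D x + D y)
    (hDmul : ∀ x y : RatFunc F, D (x * y) = D x * y + x * D y)
    (hDF : ∀ x : F, D (algebraMap F (RatFunc F) x) = algebraMap F (RatFunc F) (D₀ x))
    (hDf : D RatFunc.X = -(Polynomial.aeval (RatFunc.X : RatFunc F) R))
    -- `τ` is the endomorphism of `F(f)` extending `τ₀` with `τ f = 1 + r/f`
    (τ : RatFunc F →+* RatFunc F)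
    (hτF : ∀ x : F, τ (algebraMap F (RatFunc F) x) = algebraMap F (RatFunc F) (τ₀ x))
    (hτf : τ RatFunc.X = 1 + algebraMap F (RatFunc F) r / RatFunc.X) :
    ∀ x : RatFunc F, D (τ x) = algebraMap F (RatFunc F) s * τ (D x) :=
  stmt13_general D₀ τ₀ s r hr hcomm₀ g hg R hR D hDadd hDmul hDF hDf τ hτF hτf
end

section
/- Let C be a field of characteristic zero containing an element q that is not a root of unity, K a field extension of C, F = K(t), and τ : F → F the K-automorphism with τ(t) = qt. Suppose h ∈ K(t) admits an expansion h = Σ_{i≥m} aᵢ/tⁱ with aᵢ ∈ K, a_m ≠ 0, m ≠ 1, and h satisfies (1/(q⁴t²))τ³(h) + (1/(q³t²) + q²)τ²(h) − (1/(q⁴t²) + q)τ(h) − (1/(q³t²))h − 2/t = 0, where τ acts on K in some compatible way. Then comparing coefficients of 1/t^m yields τ(a_m) = q^{m−1}·a_m, i.e., a_m/t^{m−1} is fixed by τ. -/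
lemma eq_zpow_mul_of_sq_mul_zpow_eq {K : Type*} [Field K] {q u v : K} {m : ℤ} (hq : q ≠ 0)
    (h : q ^ (2 : ℤ) * u * q ^ (-(2 * m)) = q * v * q ^ (-m)) : u = q ^ (m - 1) * v := by
  rw [zpow_neg, zpow_neg, mul_comm 2 m, zpow_mul] at h
  rw [zpow_sub_one₀ hq]
  field_simp at h ⊢
  linear_combination h

lemma RingHom.map_eq_zpow_mul_of_map_map_eq {K : Type*} [Field K] {τ : K →+* K}
    (hτ : Function.Injective τ) {q x : K} (hτq : τ q = q) {k : ℤ}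
    (h : τ (τ x) = q ^ k * τ x) : τ x = q ^ k * x :=
  hτ <| by rw [h, map_mul, map_zpow₀, hτq]

theorem stmt16_general {K : Type*} [Field K]
    (q : K) (hq : q ≠ 0)
    (τ : K →+* K) (hτ : Function.Injective τ) (hτq : τ q = q)
    -- `h = Σ_{i ≥ m} aᵢ/tⁱ` is a formal Laurent expansion at `t = ∞`
    (a : ℤ → K) (m : ℤ) (hm : m ≠ 1)
    (hlow : ∀ i : ℤ, i < m → a i = 0)
    -- the identity in `K((1/t))`, written coefficientwise at `(1/t)ⁿ`;
    -- note `τᵏ(h) = Σᵢ τᵏ(aᵢ) q^{-k i} (1/t)ⁱ` since `τ(t) = q t`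
    (heq : ∀ n : ℤ,
      q ^ (-4 : ℤ) * ((⇑τ)^[3] (a (n - 2)) * q ^ (-(3 : ℤ) * (n - 2)))
        + q ^ (-3 : ℤ) * ((⇑τ)^[2] (a (n - 2)) * q ^ (-(2 : ℤ) * (n - 2)))
        + q ^ (2 : ℤ) * ((⇑τ)^[2] (a n) * q ^ (-(2 : ℤ) * n))
        - q ^ (-4 : ℤ) * (τ (a (n - 2)) * q ^ (-(n - 2)))
        - q * (τ (a n) * q ^ (-n))
        - q ^ (-3 : ℤ) * a (n - 2)
        - (if n = 1 then 2 else 0) = 0) :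
    τ (a m) = q ^ (m - 1) * a m := by
  -- At `n = m` the `a (m - 2)` terms vanish and `m ≠ 1` kills the `-2/t` term, leaving
  -- `q² τ²(a m) q^{-2m} = q τ(a m) q^{-m}`, i.e. `τ(τ (a m)) = q^{m-1} τ(a m)`.
  have hlowest := heq m
  simp only [hlow (m - 2) (by omega), map_zero, Function.iterate_fixed (map_zero τ), mul_zero,
    zero_mul, Function.iterate_succ, Function.iterate_zero, Function.comp_apply, id, hm,
    if_false, zero_add, sub_zero, neg_mul] at hlowest
  refine RingHom.map_eq_zpow_mul_of_map_map_eq hτ hτq (eq_zpow_mul_of_sq_mul_zpow_eq hq ?_)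
  linear_combination hlowest

theorem stmt16 {K : Type*} [Field K] [CharZero K]
    (q : K) (hq : q ≠ 0) (hroot : ∀ n : ℕ, 0 < n → q ^ n ≠ 1)
    (τ : K →+* K) (hτ : Function.Injective τ) (hτq : τ q = q)
    -- `h = Σ_{i ≥ m} aᵢ/tⁱ` is a formal Laurent expansion at `t = ∞`
    (a : ℤ → K) (m : ℤ) (hm : m ≠ 1)
    (hlow : ∀ i : ℤ, i < m → a i = 0) (ham : a m ≠ 0)
    -- the identity in `K((1/t))`, written coefficientwise at `(1/t)ⁿ`;
    -- note `τᵏ(h) = Σᵢ τᵏ(aᵢ) q^{-k i} (1/t)ⁱ` since `τ(t) = q t`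
    (heq : ∀ n : ℤ,
      q ^ (-4 : ℤ) * ((⇑τ)^[3] (a (n - 2)) * q ^ (-(3 : ℤ) * (n - 2)))
        + q ^ (-3 : ℤ) * ((⇑τ)^[2] (a (n - 2)) * q ^ (-(2 : ℤ) * (n - 2)))
        + q ^ (2 : ℤ) * ((⇑τ)^[2] (a n) * q ^ (-(2 : ℤ) * n))
        - q ^ (-4 : ℤ) * (τ (a (n - 2)) * q ^ (-(n - 2)))
        - q * (τ (a n) * q ^ (-n))
        - q ^ (-3 : ℤ) * a (n - 2)
        - (if n = 1 then 2 else 0) = 0) :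
    τ (a m) = q ^ (m - 1) * a m :=
  stmt16_general q hq τ hτ hτq a m hm hlow heq
end

section
/- Let F be a field, Y transcendental over F, and M, N ∈ F[Y] relatively prime polynomials of degrees μ and ν. Let τ be an injective endomorphism of F(Y) restricting to an endomorphism of F, with τ(Y) = 1 + r/Y for some r ∈ F^×. Then Y does not divide Y^μ·τ(M) and Y does not divide Y^ν·τ(N) (where Y^μ·τ(M) ∈ F[Y] denotes the polynomial obtained by clearing denominators in τ(M) ∈ F(Y)), and gcd(Y^μ·τ(M), Y^ν·τ(N)) = 1 in F[Y]. -/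
open Polynomial

lemma starPoly_eval_zero {F : Type*} [Field F] (τ : F →+* F) (r : F) (M : F[X]) :
    (starPoly τ r M).eval 0 = τ M.leadingCoeff * r ^ M.natDegree := by
  rw [starPoly, eval_finset_sum, Finset.sum_eq_single M.natDegree]
  · simp only [eval_mul, eval_pow, eval_add, eval_X, eval_C, Nat.sub_self, pow_zero,
      mul_one, zero_add, leadingCoeff]
  · intro i hi hne
    have h2 : 0 < M.natDegree - i := by
      have := Finset.mem_range.mp hi; omega
    simp [zero_pow h2.ne']
  · simp

lemma starPoly_eval₂ {F K : Type*} [Field F] [Field K] (τ : F →+* F) (ι : F →+* K)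
    (r : F) (M : F[X]) (y : K) (hy : y ≠ 0) :
    eval₂ ι y (starPoly τ r M) =
      y ^ M.natDegree * eval₂ (ι.comp τ) ((y + ι r) / y) M := by
  rw [starPoly, eval₂_finset_sum, eval₂_eq_sum_range, Finset.mul_sum]
  apply Finset.sum_congr rfl
  intro i hi
  have hle : i ≤ M.natDegree := Nat.lt_succ_iff.mp (Finset.mem_range.mp hi)
  have hpow : y ^ (M.natDegree - i) * y ^ i = y ^ M.natDegree := by
    rw [← pow_add, Nat.sub_add_cancel hle]
  simp only [eval₂_mul, eval₂_pow, eval₂_C, eval₂_X, eval₂_add, RingHom.comp_apply]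
  rw [div_pow]
  field_simp
  linear_combination ι (τ (M.coeff i)) * (y + ι r) ^ i * hpow

theorem stmt19 {F : Type*} [Field F] [CharZero F]
    (τ : F →+* F) (hτ : Function.Injective τ) (r : F) (hr : r ≠ 0)
    (M N : F[X]) (hM : M ≠ 0) (hN : N ≠ 0) (h : IsCoprime M N) :
    ¬ X ∣ starPoly τ r M ∧ ¬ X ∣ starPoly τ r N ∧
      IsCoprime (starPoly τ r M) (starPoly τ r N) := by
  classical
  have e0 : ∀ P : F[X], P ≠ 0 → (starPoly τ r P).eval 0 ≠ 0 := by
    intro P hP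
    rw [starPoly_eval_zero]
    exact mul_ne_zero ((map_ne_zero_iff τ hτ).mpr (leadingCoeff_ne_zero.mpr hP))
      (pow_ne_zero _ hr)
  have hXd : ∀ P : F[X], P ≠ 0 → ¬ X ∣ starPoly τ r P := by
    intro P hP hdvd
    rw [X_dvd_iff] at hdvd
    exact e0 P hP (by rwa [← coeff_zero_eq_eval_zero])
  refine ⟨hXd M hM, hXd N hN, ?_⟩
  by_contra hco
  set K := AlgebraicClosure F
  set ι : F →+* K := algebraMap F K with hι
  set g := EuclideanDomain.gcd (starPoly τ r M) (starPoly τ r N) with hg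
  have hgu : ¬ IsUnit g := fun hu => hco (EuclideanDomain.gcd_isUnit_iff.mp hu)
  have hg0 : g ≠ 0 := by
    intro h0
    have := (EuclideanDomain.gcd_eq_zero_iff.mp h0).1
    exact e0 M hM (by rw [this]; simp)
  have hdeg : (g.map ι).degree ≠ 0 := by
    rw [degree_map]
    intro hd
    exact hgu (isUnit_iff_degree_eq_zero.mpr hd)
  obtain ⟨y, hy⟩ := IsAlgClosed.exists_root (g.map ι) hdeg
  have hy0 : y ≠ 0 := by
    intro h0
    subst h0
    have hdM : g.map ι ∣ (starPoly τ r M).map ι :=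
      Polynomial.map_dvd ι (EuclideanDomain.gcd_dvd_left _ _)
    have h2 : eval₂ ι 0 (starPoly τ r M) = 0 := by
      have := hy.dvd hdM
      rwa [IsRoot, eval_map] at this
    rw [eval₂_at_zero, coeff_zero_eq_eval_zero] at h2
    exact e0 M hM ((_root_.map_eq_zero ι).mp h2)
  have root : ∀ P : F[X], eval₂ (ι.comp τ) ((y + ι r) / y) P = 0 ∨
      ¬ ((starPoly τ r P).map ι).IsRoot y := by
    intro P
    by_cases hroot : ((starPoly τ r P).map ι).IsRoot y
    · left
      have h2 : eval₂ ι y (starPoly τ r P) = 0 := by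
        rwa [IsRoot, eval_map] at hroot
      rw [starPoly_eval₂ τ ι r P y hy0] at h2
      exact (mul_eq_zero.mp h2).resolve_left (pow_ne_zero _ hy0)
    · exact Or.inr hroot
  have hrM : ((starPoly τ r M).map ι).IsRoot y :=
    hy.dvd (Polynomial.map_dvd ι (EuclideanDomain.gcd_dvd_left _ _))
  have hrN : ((starPoly τ r N).map ι).IsRoot y :=
    hy.dvd (Polynomial.map_dvd ι (EuclideanDomain.gcd_dvd_right _ _))
  have hM0 : eval₂ (ι.comp τ) ((y + ι r) / y) M = 0 := (root M).resolve_right (by simpa)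
  have hN0 : eval₂ (ι.comp τ) ((y + ι r) / y) N = 0 := (root N).resolve_right (by simpa)
  obtain ⟨A, B, hAB⟩ := h
  have := congrArg (eval₂RingHom (ι.comp τ) ((y + ι r) / y)) hAB
  simp only [map_add, map_mul, map_one, coe_eval₂RingHom, hM0, hN0, mul_zero, add_zero] at this
  exact one_ne_zero this.symm
end
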